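/- Let K be the free abelian group on generators {t_m : m ∈ ℤ} ∪ {h_m : m ∈ ℤ} and O the free abelian group on {x_m : m ∈ ℤ} ∪ {y_m : m ∈ ℤ}. Let φ : K → O be given on generators by φ(h_m) = x_m - x_{m-2} and φ(t_m) = x_{m-1} + x_{m-2} + y_m. Then φ is injective. -/

import Mathlib

/-!
The `y_m`-coefficient of `φ k` is the `t_m`-coefficient of `k`, so an element of the kernel has
no `t`-part. Its `x_p`-coefficient is then `k(h_p) - k(h_{p+2})`, so the `h`-coefficients of a
kernel element are `2`-periodic in the index; being finitely supported, they all vanish.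
-/

/-- The free abelian group `K` on `{t_m}_{m∈ℤ} ∪ {h_m}_{m∈ℤ}`. -/
abbrev K : Type := (ℤ ⊕ ℤ) →₀ ℤ

/-- The free abelian group `O` on `{x_m}_{m∈ℤ} ∪ {y_m}_{m∈ℤ}`. -/
abbrev O : Type := (ℤ ⊕ ℤ) →₀ ℤ

/-- The generator `t_m` of `K`. -/
noncomputable def t (m : ℤ) : K := Finsupp.single (Sum.inl m) 1

/-- The generator `h_m` of `K`. -/
noncomputable def h (m : ℤ) : K := Finsupp.single (Sum.inr m) 1

/-- The generator `x_m` of `O`. -/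
noncomputable def x (m : ℤ) : O := Finsupp.single (Sum.inl m) 1

/-- The generator `y_m` of `O`. -/
noncomputable def y (m : ℤ) : O := Finsupp.single (Sum.inr m) 1

theorem Function.Periodic.eq_zero_of_hasFiniteSupport {α M : Type*} [AddCommGroup α]
    [IsAddTorsionFree α] [Zero M] {g : α → M} {c : α} (hg : Function.Periodic g c) (hc : c ≠ 0)
    (hfin : g.HasFiniteSupport) : g = 0 := by
  funext p
  by_contra hp
  have hinj : Function.Injective fun n : ℤ => p + n • c :=
    (add_right_injective p).comp (smul_left_injective ℤ hc)
  refine (Set.infinite_range_of_injective hinj).mono ?_ hfin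
  rintro _ ⟨n, rfl⟩
  exact (hg.zsmul n p).trans_ne hp

theorem phi_apply_inr (φ : K →+ O) (hφh : ∀ m : ℤ, φ (h m) = x m - x (m - 2))
    (hφt : ∀ m : ℤ, φ (t m) = x (m - 1) + x (m - 2) + y m)
    (k : K) (m : ℤ) : φ k (Sum.inr m) = k (Sum.inl m) := by
  suffices (Finsupp.applyAddHom (Sum.inr m)).comp φ = Finsupp.applyAddHom (Sum.inl m) from
    DFunLike.congr_fun this k
  ext (a | a)
  · change φ (t a) _ = t a _
    rw [hφt]
    simp [t, x, y, Finsupp.single_apply]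
  · change φ (h a) _ = h a _
    rw [hφh]
    simp [h, x]

theorem phi_apply_inl (φ : K →+ O) (hφh : ∀ m : ℤ, φ (h m) = x m - x (m - 2))
    (hφt : ∀ m : ℤ, φ (t m) = x (m - 1) + x (m - 2) + y m)
    (k : K) (p : ℤ) :
    φ k (Sum.inl p) =
      k (Sum.inl (p + 1)) + k (Sum.inl (p + 2)) + k (Sum.inr p) - k (Sum.inr (p + 2)) := by
  suffices (Finsupp.applyAddHom (Sum.inl p)).comp φ =
      Finsupp.applyAddHom (Sum.inl (p + 1)) + Finsupp.applyAddHom (Sum.inl (p + 2)) +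
        Finsupp.applyAddHom (Sum.inr p) - Finsupp.applyAddHom (Sum.inr (p + 2)) from
    DFunLike.congr_fun this k
  ext (a | a)
  · change φ (t a) _ = t a _ + t a _ + t a _ - t a _
    rw [hφt]
    simp [t, x, y, Finsupp.single_apply, sub_eq_iff_eq_add]
  · change φ (h a) _ = h a _ + h a _ + h a _ - h a _
    rw [hφh]
    simp [h, x, Finsupp.single_apply, sub_eq_iff_eq_add]

theorem phi_injective (φ : K →+ O)
    (hφh : ∀ m : ℤ, φ (h m) = x m - x (m - 2))
    (hφt : ∀ m : ℤ, φ (t m) = x (m - 1) + x (m - 2) + y m) :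
    Function.Injective φ := by
  rw [injective_iff_map_eq_zero]
  intro k hk
  have ht : ∀ m, k (Sum.inl m) = 0 := fun m => by
    simpa [hk] using (phi_apply_inr φ hφh hφt k m).symm
  have hh_periodic : Function.Periodic (fun p => k (Sum.inr p)) 2 := fun p => by
    have := phi_apply_inl φ hφh hφt k p
    simp only [hk, ht, Finsupp.coe_zero, Pi.zero_apply, zero_add] at this
    linarith
  have hh : (fun p => k (Sum.inr p)) = 0 :=
    hh_periodic.eq_zero_of_hasFiniteSupport two_ne_zero
      (k.hasFiniteSupport.fun_comp_of_injective Sum.inr_injective)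
  ext (m | m)
  exacts [ht m, congrFun hh m]
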